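/- arXiv:2101.01648 — 5 statements merged into one kernel-verified Lean document; each statement's English description precedes it below -/
import Mathlib

section
/- Let R̃ ∈ SO(3) and let M ∈ ℝ³ˣ³ be symmetric, positive definite (rank 3) with Tr(M) = 3. Let M̆ = Tr(M)I₃ − M and let λ̲ > 0 denote the minimal eigenvalue (minimal singular value) of M̆. If 1 + Tr(R̃ M M⁻¹) > 0 (equivalently Tr(R̃) > −1), then ‖R̃M‖_I ≤ (2/λ̲) · ‖vex(P_a(R̃M))‖² / (1 + Tr(R̃ M M⁻¹)). -/
open Matrix

noncomputable section

/-- `SO(3)`: real 3×3 matrices with `RᵀR = RRᵀ = I` and `det R = 1`. -/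
def so3 (R : Matrix (Fin 3) (Fin 3) ℝ) : Prop :=
  Rᵀ * R = 1 ∧ R * Rᵀ = 1 ∧ R.det = 1

/-- The skew-symmetric matrix `[y]ₓ` with `[y]ₓ x = y × x`. -/
def skew (y : Fin 3 → ℝ) : Matrix (Fin 3) (Fin 3) ℝ :=
  !![0, -y 2, y 1; y 2, 0, -y 0; -y 1, y 0, 0]

/-- `vex`, the inverse of `[·]ₓ` on skew-symmetric matrices. -/
def vex (A : Matrix (Fin 3) (Fin 3) ℝ) : Fin 3 → ℝ :=
  ![A 2 1, A 0 2, A 1 0]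

/-- Anti-symmetric projection `P_a(A) = (A - Aᵀ)/2`. -/
def Pa (A : Matrix (Fin 3) (Fin 3) ℝ) : Matrix (Fin 3) (Fin 3) ℝ :=
  (1 / 2 : ℝ) • (A - Aᵀ)

/-- Normalized Euclidean distance `‖A‖_I = (1/4) Tr(I - A)`. -/
def normI (A : Matrix (Fin 3) (Fin 3) ℝ) : ℝ :=
  (1 / 4 : ℝ) * Matrix.trace (1 - A)

/-- Euclidean norm on ℝ³. -/
def euclNorm (v : Fin 3 → ℝ) : ℝ := Real.sqrt (∑ i, v i ^ 2)

/-- Homogeneous transformation matrix `T = [R P; 0 1]`. -/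
def homT (R : Matrix (Fin 3) (Fin 3) ℝ) (P : Fin 3 → ℝ) :
    Matrix (Fin 3 ⊕ Fin 1) (Fin 3 ⊕ Fin 1) ℝ :=
  Matrix.fromBlocks R (Matrix.of fun i (_ : Fin 1) => P i) 0 1

/-- `SE(3)`: 4×4 matrices `[R P; 0 1]` with `R ∈ SO(3)`, `P ∈ ℝ³`. -/
def SE3 (T : Matrix (Fin 3 ⊕ Fin 1) (Fin 3 ⊕ Fin 1) ℝ) : Prop :=
  ∃ R P, so3 R ∧ T = homT R P

/-- Wedge map `[U]∧ = [[Ω]ₓ V; 0 0]` for `U = (Ω, V) ∈ ℝ⁶`. -/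
def wedge (Ω V : Fin 3 → ℝ) : Matrix (Fin 3 ⊕ Fin 1) (Fin 3 ⊕ Fin 1) ℝ :=
  Matrix.fromBlocks (skew Ω) (Matrix.of fun i (_ : Fin 1) => V i) 0 0

/-- Wedge map on `ℝ⁶` represented as `Fin 3 ⊕ Fin 3 → ℝ`. -/
def wedgeS (u : Fin 3 ⊕ Fin 3 → ℝ) : Matrix (Fin 3 ⊕ Fin 1) (Fin 3 ⊕ Fin 1) ℝ :=
  wedge (u ∘ Sum.inl) (u ∘ Sum.inr)

/-- Augmented adjoint `Ad̄_T = [R 0; [P]ₓR R]` of `T = [R P; 0 1]`. -/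
def adBar (R : Matrix (Fin 3) (Fin 3) ℝ) (P : Fin 3 → ℝ) :
    Matrix (Fin 3 ⊕ Fin 3) (Fin 3 ⊕ Fin 3) ℝ :=
  Matrix.fromBlocks R 0 (skew P * R) R

/-- `Ad̄_{T⁻¹} = [Rᵀ 0; -Rᵀ[P]ₓ Rᵀ]` for `T = [R P; 0 1]`. -/
def adBarInv (R : Matrix (Fin 3) (Fin 3) ℝ) (P : Fin 3 → ℝ) :
    Matrix (Fin 3 ⊕ Fin 3) (Fin 3 ⊕ Fin 3) ℝ :=
  Matrix.fromBlocks Rᵀ 0 (-(Rᵀ * skew P)) Rᵀ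

/-- Rotation block of a 4×4 homogeneous matrix. -/
def rotOf (T : Matrix (Fin 3 ⊕ Fin 1) (Fin 3 ⊕ Fin 1) ℝ) : Matrix (Fin 3) (Fin 3) ℝ :=
  Matrix.of fun i j => T (Sum.inl i) (Sum.inl j)

/-- Position block of a 4×4 homogeneous matrix. -/
def posOf (T : Matrix (Fin 3 ⊕ Fin 1) (Fin 3 ⊕ Fin 1) ℝ) : Fin 3 → ℝ :=
  fun i => T (Sum.inl i) (Sum.inr 0)

/-- Augmented adjoint of a 4×4 homogeneous matrix. -/
def adBarT (T : Matrix (Fin 3 ⊕ Fin 1) (Fin 3 ⊕ Fin 1) ℝ) :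
    Matrix (Fin 3 ⊕ Fin 3) (Fin 3 ⊕ Fin 3) ℝ :=
  adBar (rotOf T) (posOf T)

/-- Homogeneous coordinates `(v, 1) ∈ ℝ⁴` of `v ∈ ℝ³`. -/
def hvec (v : Fin 3 → ℝ) : Fin 3 ⊕ Fin 1 → ℝ := Sum.elim v 1

/-! With `s = 1 + tr R` and `a = vex (P_a R)`, Cayley–Hamilton and `adj R = Rᵀ` give
`Rᵀ = R² - (tr R) R + (tr R) I`, which is the scaled Rodrigues formula
`s R = s (I + [a]ₓ) + 2 [a]ₓ²`. Multiplying it by the symmetric `M` and writing `M̆ = tr(M) I - M`,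
`s (tr M - tr (R M)) = 2 aᵀ M̆ a` and `s vex (P_a (R M)) = (s/2) M̆ a + a × M̆ a`; as `a × M̆ a ⊥ M̆ a`,
the latter gives `‖M̆ a‖² ≤ 4 ‖vex (P_a (R M))‖²`. Since `M̆ - λ̲ I ⪰ 0` we have
`λ̲ aᵀ M̆ a ≤ ‖M̆ a‖²`, and `tr M = 3` makes `‖R M‖_I = (tr M - tr (R M)) / 4`. -/

section Spectral

variable {n : Type*} [Fintype n] [DecidableEq n]

theorem Matrix.IsHermitian.posSemidef_sub_smul_one {K : Matrix n n ℝ} (hK : K.IsHermitian)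
    {lam : ℝ} (hlam : ∀ μ, Module.End.HasEigenvalue (toLin' K) μ → lam ≤ μ) :
    (K - lam • 1).PosSemidef := by
  have hN : (K - lam • 1).IsHermitian := hK.sub (isHermitian_one.smul (IsSelfAdjoint.all lam))
  rw [hN.posSemidef_iff_eigenvalues_nonneg]
  intro i
  have hmem : hN.eigenvalues i ∈ spectrum ℝ (K - algebraMap ℝ _ lam) := by
    rw [Algebra.algebraMap_eq_smul_one]
    exact hN.eigenvalues_mem_spectrum_real i
  rw [← spectrum.sub_singleton_eq] at hmem
  obtain ⟨μ, hμ, r, rfl, hμr⟩ := hmem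
  have hle := hlam μ (Module.End.hasEigenvalue_iff_mem_spectrum.mpr (by rwa [spectrum_toLin']))
  simp only [Pi.zero_apply, ← hμr]
  linarith

/-- With `N = K - λ I`: `‖K x‖² - λ xᵀ K x = ‖N x‖² + λ xᵀ N x`. -/
theorem Matrix.PosSemidef.mul_dotProduct_mulVec_le {K : Matrix n n ℝ} {lam : ℝ}
    (hpsd : (K - lam • 1).PosSemidef) (hlam : 0 ≤ lam) (x : n → ℝ) :
    lam * (x ⬝ᵥ K *ᵥ x) ≤ (K *ᵥ x) ⬝ᵥ (K *ᵥ x) := by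
  have hNx := hpsd.dotProduct_mulVec_nonneg x
  have hsq := dotProduct_star_self_nonneg ((K - lam • 1) *ᵥ x)
  simp only [star_trivial, sub_mulVec, smul_mulVec, one_mulVec, dotProduct_sub, sub_dotProduct,
    dotProduct_smul, smul_dotProduct, smul_eq_mul, dotProduct_comm x (K *ᵥ x)] at hNx hsq ⊢
  nlinarith [mul_nonneg hlam hNx]

end Spectral

theorem two_smul_adjugate_fin_three {R : Type*} [CommRing R] (A : Matrix (Fin 3) (Fin 3) R) :
    (2 : R) • A.adjugate =
      (2 : R) • (A * A) - (2 * trace A) • A + (trace A ^ 2 - trace (A * A)) • 1 := by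
  ext i j
  fin_cases i <;> fin_cases j <;>
    simp only [adjugate_fin_three, trace_fin_three, mul_apply, Fin.sum_univ_three, one_apply,
      Matrix.sub_apply, Matrix.add_apply, Matrix.smul_apply, of_apply, cons_val', cons_val,
      cons_val_zero, cons_val_one, cons_val_fin_one, smul_eq_mul, Fin.isValue, Fin.zero_eta,
      Fin.mk_one, Fin.reduceFinMk, Fin.reduceEq, ↓reduceIte] <;> ring

theorem so3.adjugate_eq_transpose {R : Matrix (Fin 3) (Fin 3) ℝ} (hR : so3 R) :
    R.adjugate = Rᵀ := by
  obtain ⟨-, hRRt, hdet⟩ := hR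
  calc R.adjugate = R.adjugate * (R * Rᵀ) := by rw [hRRt, mul_one]
    _ = Rᵀ := by rw [← Matrix.mul_assoc, adjugate_mul, hdet, one_smul, Matrix.one_mul]

theorem so3.transpose_eq_mul_self_sub {R : Matrix (Fin 3) (Fin 3) ℝ} (hR : so3 R) :
    Rᵀ = R * R - trace R • R + trace R • 1 := by
  have h := two_smul_adjugate_fin_three R
  rw [hR.adjugate_eq_transpose] at h
  have htr := congrArg trace h
  simp only [trace_smul, trace_sub, trace_add, trace_transpose, trace_one, smul_eq_mul,
    Fintype.card_fin] at htr
  have hsq : trace (R * R) = trace R ^ 2 - 2 * trace R := by push_cast at htr; linarith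
  rw [hsq] at h
  calc Rᵀ = (2 : ℝ)⁻¹ • ((2 : ℝ) • Rᵀ) := by rw [smul_smul]; norm_num
    _ = _ := by rw [h]; module

theorem skew_vex_Pa (A : Matrix (Fin 3) (Fin 3) ℝ) : skew (vex (Pa A)) = Pa A := by
  ext i j
  fin_cases i <;> fin_cases j <;> simp [skew, vex, Pa, ← mul_neg]

theorem vex_Pa_smul (c : ℝ) (A : Matrix (Fin 3) (Fin 3) ℝ) :
    vex (Pa (c • A)) = c • vex (Pa A) := by
  rw [Pa, Pa, transpose_smul, ← smul_sub, smul_comm]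
  ext i
  fin_cases i <;> rfl

/-- Rodrigues' formula `R = I + sin θ [u]ₓ + (1 - cos θ) [u]ₓ²` multiplied by `s = 2 (1 + cos θ)`,
in terms of `a = sin θ u`. -/
def rodriguesMatrix (s : ℝ) (a : Fin 3 → ℝ) : Matrix (Fin 3) (Fin 3) ℝ :=
  s • (1 + skew a) + (2 : ℝ) • (skew a * skew a)

theorem so3.smul_eq_rodriguesMatrix {R : Matrix (Fin 3) (Fin 3) ℝ} (hR : so3 R) :
    (1 + trace R) • R = rodriguesMatrix (1 + trace R) (vex (Pa R)) := by
  have hsq : R * R = Rᵀ + trace R • R - trace R • 1 := by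
    rw [hR.transpose_eq_mul_self_sub]; abel
  have hsqT : Rᵀ * Rᵀ = R + trace R • Rᵀ - trace R • 1 := by
    rw [← transpose_mul, hsq]; simp
  obtain ⟨hRtR, hRRt, -⟩ := hR
  rw [rodriguesMatrix, skew_vex_Pa, Pa]
  simp only [smul_mul_smul_comm, sub_mul, mul_sub, hsq, hsqT, hRtR, hRRt]
  module

section SymmetricFactor

variable {M : Matrix (Fin 3) (Fin 3) ℝ}

theorem trace_sub_trace_rodriguesMatrix_mul (hM : M.IsSymm) (s : ℝ) (a : Fin 3 → ℝ) :
    s * trace M - trace (rodriguesMatrix s a * M) = 2 * (a ⬝ᵥ (trace M • 1 - M) *ᵥ a) := by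
  simp only [rodriguesMatrix, skew, trace_fin_three, mul_apply, Fin.sum_univ_three, one_apply,
    Matrix.add_apply, Matrix.sub_apply, Matrix.smul_apply, of_apply, cons_val', cons_val,
    cons_val_zero, cons_val_one, cons_val_fin_one, smul_eq_mul, Fin.isValue, Fin.reduceEq,
    ↓reduceIte, dotProduct, mulVec, hM.apply 0 1, hM.apply 0 2, hM.apply 1 2]
  ring

theorem vex_Pa_rodriguesMatrix_mul (hM : M.IsSymm) (s : ℝ) (a : Fin 3 → ℝ) :
    vex (Pa (rodriguesMatrix s a * M)) =
      (s / 2) • ((trace M • 1 - M) *ᵥ a) + a ⨯₃ ((trace M • 1 - M) *ᵥ a) := by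
  ext i
  fin_cases i <;>
    simp only [rodriguesMatrix, skew, vex, Pa, cross_apply, trace_fin_three, mul_apply,
      Fin.sum_univ_three, one_apply, Matrix.add_apply, Matrix.sub_apply, Matrix.smul_apply,
      transpose_apply, Pi.add_apply, Pi.smul_apply, of_apply, cons_val', cons_val,
      cons_val_zero, cons_val_one, cons_val_fin_one, smul_eq_mul, Fin.isValue, Fin.zero_eta,
      Fin.mk_one, Fin.reduceFinMk, Fin.reduceEq, ↓reduceIte, dotProduct, mulVec,
      hM.apply 0 1, hM.apply 0 2, hM.apply 1 2] <;> ring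

end SymmetricFactor

theorem dotProduct_self_le_of_smul_eq_add_cross {s : ℝ} (hs : s ≠ 0) {v w a : Fin 3 → ℝ}
    (h : s • v = (s / 2) • w + a ⨯₃ w) : w ⬝ᵥ w ≤ 4 * (v ⬝ᵥ v) := by
  have hsq : s ^ 2 * (v ⬝ᵥ v) = s ^ 2 / 4 * (w ⬝ᵥ w) + (a ⨯₃ w) ⬝ᵥ (a ⨯₃ w) := by
    have h2 := congrArg (fun u => u ⬝ᵥ u) h
    simp only [smul_dotProduct, dotProduct_smul, add_dotProduct, dotProduct_add, dot_cross_self,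
      smul_eq_mul] at h2
    rw [dotProduct_comm (a ⨯₃ w) w, dot_cross_self] at h2
    linear_combination h2
  have hcross : 0 ≤ (a ⨯₃ w) ⬝ᵥ (a ⨯₃ w) := by
    simpa using dotProduct_star_self_nonneg (a ⨯₃ w)
  have hs2 : 0 < s ^ 2 := by positivity
  nlinarith

theorem stmt2_general (Rt M : Matrix (Fin 3) (Fin 3) ℝ) (hRt : so3 Rt)
    (hMsym : Mᵀ = M) (hMpd : M.PosDef) (hMtr : Matrix.trace M = 3)
    (lam : ℝ) (hlam_pos : 0 < lam)
    (hlam_min : ∀ μ : ℝ, Module.End.HasEigenvalue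
      (Matrix.toLin' (Matrix.trace M • (1 : Matrix (Fin 3) (Fin 3) ℝ) - M)) μ → lam ≤ μ)
    (hpos : 0 < 1 + Matrix.trace (Rt * M * M⁻¹)) :
    normI (Rt * M) ≤
      (2 / lam) * (∑ i, (vex (Pa (Rt * M)) i) ^ 2) / (1 + Matrix.trace (Rt * M * M⁻¹)) := by
  rw [mul_nonsing_inv_cancel_right _ _ ((isUnit_iff_isUnit_det M).mp hMpd.isUnit)] at hpos ⊢
  set s := 1 + trace Rt
  set a := vex (Pa Rt)
  set K := trace M • (1 : Matrix (Fin 3) (Fin 3) ℝ) - M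
  have hK : K.IsHermitian := isHermitian_iff_isSymm.mpr ((isSymm_one.smul _).sub hMsym)
  have hquad : lam * (a ⬝ᵥ K *ᵥ a) ≤ (K *ᵥ a) ⬝ᵥ (K *ᵥ a) :=
    (hK.posSemidef_sub_smul_one hlam_min).mul_dotProduct_mulVec_le hlam_pos.le a
  have htrace : s * (trace M - trace (Rt * M)) = 2 * (a ⬝ᵥ K *ᵥ a) := by
    rw [mul_sub, ← smul_eq_mul s (trace (Rt * M)), ← trace_smul, ← smul_mul_assoc,
      hRt.smul_eq_rodriguesMatrix]
    exact trace_sub_trace_rodriguesMatrix_mul hMsym s a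
  have hvex : s • vex (Pa (Rt * M)) = (s / 2) • (K *ᵥ a) + a ⨯₃ (K *ᵥ a) := by
    rw [← vex_Pa_smul, ← smul_mul_assoc, hRt.smul_eq_rodriguesMatrix]
    exact vex_Pa_rodriguesMatrix_mul hMsym s a
  have hKa := dotProduct_self_le_of_smul_eq_add_cross hpos.ne' hvex
  have hsum : ∑ i, (vex (Pa (Rt * M)) i) ^ 2 = vex (Pa (Rt * M)) ⬝ᵥ vex (Pa (Rt * M)) := by
    simp only [dotProduct, sq]
  have hnormI : normI (Rt * M) = (trace M - trace (Rt * M)) / 4 := by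
    rw [normI, trace_sub, trace_one, Fintype.card_fin, hMtr]; push_cast; ring
  rw [hnormI, hsum, div_le_div_iff₀ (by norm_num) hpos]
  field_simp
  linear_combination lam * htrace + 2 * hquad + 2 * hKa

/-- Lemma 1: for `R̃ ∈ SO(3)` and `M` symmetric positive definite with
`Tr M = 3`, with `M̆ = Tr(M)I − M` and `λ̲ > 0` its minimal eigenvalue, if
`1 + Tr(R̃MM⁻¹) > 0` then
`‖R̃M‖_I ≤ (2/λ̲)·‖vex(P_a(R̃M))‖²/(1 + Tr(R̃MM⁻¹))`. -/
theorem stmt2 (Rt M : Matrix (Fin 3) (Fin 3) ℝ) (hRt : so3 Rt)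
    (hMsym : Mᵀ = M) (hMpd : M.PosDef) (hMtr : Matrix.trace M = 3)
    (lam : ℝ) (hlam_pos : 0 < lam)
    (hlam_eig : Module.End.HasEigenvalue
      (Matrix.toLin' (Matrix.trace M • (1 : Matrix (Fin 3) (Fin 3) ℝ) - M)) lam)
    (hlam_min : ∀ μ : ℝ, Module.End.HasEigenvalue
      (Matrix.toLin' (Matrix.trace M • (1 : Matrix (Fin 3) (Fin 3) ℝ) - M)) μ → lam ≤ μ)
    (hpos : 0 < 1 + Matrix.trace (Rt * M * M⁻¹)) :
    normI (Rt * M) ≤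
      (2 / lam) * (∑ i, (vex (Pa (Rt * M)) i) ^ 2) / (1 + Matrix.trace (Rt * M * M⁻¹)) :=
  stmt2_general Rt M hRt hMsym hMpd hMtr lam hlam_pos hlam_min hpos
end
end

section
/- Let R̃ ∈ SO(3) and let M ∈ ℝ³ˣ³ be symmetric positive definite. Then ‖R̃M‖_I = (1/4)Tr((I₃ − R̃)M) = 0 if and only if R̃ = I₃. -/
/-!
With `B = 1 - R`, orthogonality of `R` gives `B Bᵀ = B + Bᵀ`, hence `tr (Bᵀ M B) = 2 tr (B M)` for
symmetric `M`. So if `tr (B M) = 0`, the positive semidefinite matrix `Bᵀ M B` has trace zero and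
vanishes; positive definiteness of `M` then forces every `B x` to be zero, i.e. `R = 1`.
-/

open Matrix

noncomputable section

open scoped ComplexOrder

theorem Matrix.one_sub_mul_transpose_one_sub {n R : Type*} [Fintype n] [DecidableEq n]
    [CommRing R] {U : Matrix n n R} (hU : U * Uᵀ = 1) :
    (1 - U) * (1 - U)ᵀ = (1 - U) + (1 - U)ᵀ := by
  simp only [Matrix.sub_mul, Matrix.mul_sub, transpose_sub, transpose_one, hU, Matrix.one_mul,
    Matrix.mul_one]
  abel

theorem Matrix.trace_transpose_mul_mul_one_sub {n R : Type*} [Fintype n] [DecidableEq n]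
    [CommRing R] {U M : Matrix n n R} (hU : U * Uᵀ = 1) (hM : M.IsSymm) :
    trace ((1 - U)ᵀ * M * (1 - U)) = 2 * trace ((1 - U) * M) := by
  have hsymm : trace ((1 - U)ᵀ * M) = trace ((1 - U) * M) := by
    rw [← trace_transpose, transpose_mul, transpose_transpose, hM.eq, trace_mul_comm]
  rw [trace_mul_cycle, one_sub_mul_transpose_one_sub hU, Matrix.add_mul, trace_add, hsymm,
    two_mul]

theorem Matrix.PosDef.eq_zero_of_trace_conjTranspose_mul_mul_eq_zero {n m 𝕜 : Type*}
    [Fintype n] [Fintype m] [RCLike 𝕜] {M : Matrix n n 𝕜} (hM : M.PosDef) {B : Matrix n m 𝕜}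
    (h : trace (Bᴴ * M * B) = 0) : B = 0 := by
  have hzero : Bᴴ * M * B = 0 :=
    (hM.posSemidef.conjTranspose_mul_mul_same B).trace_eq_zero_iff.mp h
  refine ext_iff_mulVec.mpr fun x => ?_
  have hquad : star (B *ᵥ x) ⬝ᵥ M *ᵥ (B *ᵥ x) = 0 := by
    rw [star_mulVec, dotProduct_mulVec, vecMul_vecMul, ← dotProduct_mulVec, mulVec_mulVec, hzero]
    simp
  by_contra hx
  exact (hM.dotProduct_mulVec_pos (by simpa using hx)).ne' hquad

/-- for `R̃ ∈ SO(3)` and `M` symmetric positive definite,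
`‖R̃M‖_I = (1/4)Tr((I − R̃)M) = 0` iff `R̃ = I`. -/
theorem stmt11 (Rt M : Matrix (Fin 3) (Fin 3) ℝ) (hRt : so3 Rt) (hM : M.PosDef) :
    ((1 / 4 : ℝ) * Matrix.trace ((1 - Rt) * M) = 0 ↔ Rt = 1) := by
  refine ⟨fun h => ?_, fun h => by simp [h]⟩
  have htrace : trace ((1 - Rt) * M) = 0 := by linarith
  have hMsymm : M.IsSymm := isHermitian_iff_isSymm.mp hM.isHermitian
  have hquad : trace ((1 - Rt)ᴴ * M * (1 - Rt)) = 0 := by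
    rw [conjTranspose_eq_transpose_of_trivial,
      trace_transpose_mul_mul_one_sub hRt.2.1 hMsymm, htrace, mul_zero]
  exact (sub_eq_zero.mp (hM.eq_zero_of_trace_conjTranspose_mul_mul_eq_zero hquad)).symm
end
end

section
/- Let R, R̂ ∈ SO(3), set R̃ = R̂Rᵀ. Let υ₁ʳ,…,υ_{n_R}ʳ ∈ ℝ³ and s₁,…,s_{n_R} ≥ 0, and set M = Σⱼ sⱼ υⱼʳ(υⱼʳ)ᵀ, υⱼᵃ = Rᵀυⱼʳ, υ̂ⱼᵃ = R̂ᵀυⱼʳ. Then P_a(R̃M) = [ R̂ Σⱼ (sⱼ/2)(υ̂ⱼᵃ × υⱼᵃ) ]ₓ; equivalently, vex(P_a(R̃M)) = R̂ Σⱼ (sⱼ/2)(υ̂ⱼᵃ × υⱼᵃ). -/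
open Matrix

noncomputable section

lemma cross_mulVec (M : Matrix (Fin 3) (Fin 3) ℝ) (a b : Fin 3 → ℝ) :
    crossProduct (M.mulVec a) (M.mulVec b) = (M.adjugate)ᵀ.mulVec (crossProduct a b) := by
  ext i
  fin_cases i <;>
    simp [crossProduct, Matrix.mulVec, Matrix.adjugate_fin_three, dotProduct,
      Fin.sum_univ_three] <;> ring

lemma skew_cross (a b : Fin 3 → ℝ) :
    skew (crossProduct a b) = Matrix.vecMulVec b a - Matrix.vecMulVec a b := by
  ext i j
  fin_cases i <;> fin_cases j <;>
    simp [skew, crossProduct, Matrix.vecMulVec] <;> ring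

lemma mul_vecMulVec (M : Matrix (Fin 3) (Fin 3) ℝ) (a b : Fin 3 → ℝ) :
    M * Matrix.vecMulVec a b = Matrix.vecMulVec (M.mulVec a) b := by
  ext i j
  simp [Matrix.mul_apply, Matrix.vecMulVec, Matrix.mulVec, dotProduct, Finset.sum_mul, mul_assoc]

lemma vecMulVec_tr (a b : Fin 3 → ℝ) :
    (Matrix.vecMulVec a b)ᵀ = Matrix.vecMulVec b a := by
  ext i j; simp [Matrix.vecMulVec, mul_comm]

lemma skew_smul (c : ℝ) (y : Fin 3 → ℝ) : skew (c • y) = c • skew y := by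
  ext i j
  fin_cases i <;> fin_cases j <;> simp [skew]

lemma skew_sum {n : ℕ} (f : Fin n → Fin 3 → ℝ) :
    skew (∑ j, f j) = ∑ j, skew (f j) := by
  ext i j
  fin_cases i <;> fin_cases j <;>
    simp [skew, Matrix.sum_apply, Finset.sum_apply]

lemma vex_skew (y : Fin 3 → ℝ) : vex (skew y) = y := by
  ext i
  fin_cases i <;> simp [vex, skew]

/-- with `R̃ = R̂Rᵀ`, `M = Σⱼ sⱼ υⱼʳ(υⱼʳ)ᵀ`, `υⱼᵃ = Rᵀυⱼʳ`, `υ̂ⱼᵃ = R̂ᵀυⱼʳ`,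
`P_a(R̃M) = [R̂ Σⱼ (sⱼ/2)(υ̂ⱼᵃ × υⱼᵃ)]ₓ`, equivalently
`vex(P_a(R̃M)) = R̂ Σⱼ (sⱼ/2)(υ̂ⱼᵃ × υⱼᵃ)`. -/
theorem stmt12 (R Rh : Matrix (Fin 3) (Fin 3) ℝ) (hR : so3 R) (hRh : so3 Rh)
    (nR : ℕ) (υr : Fin nR → Fin 3 → ℝ) (s : Fin nR → ℝ) (hs : ∀ j, 0 ≤ s j) :
    Pa (Rh * Rᵀ * ∑ j, s j • Matrix.vecMulVec (υr j) (υr j)) =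
      skew (Rh.mulVec (∑ j, (s j / 2) •
        crossProduct (Rhᵀ.mulVec (υr j)) (Rᵀ.mulVec (υr j)))) ∧
    vex (Pa (Rh * Rᵀ * ∑ j, s j • Matrix.vecMulVec (υr j) (υr j))) =
      Rh.mulVec (∑ j, (s j / 2) •
        crossProduct (Rhᵀ.mulVec (υr j)) (Rᵀ.mulVec (υr j))) :=  by
  obtain ⟨hR1, hR2, hR3⟩ := hR
  obtain ⟨hRh1, hRh2, hRh3⟩ := hRh
  have hadj : Rh.adjugate = Rhᵀ := by
    have h1 : Rh * Rh.adjugate = 1 := by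
      rw [Matrix.mul_adjugate, hRh3, one_smul]
    calc Rh.adjugate = (Rhᵀ * Rh) * Rh.adjugate := by rw [hRh1, Matrix.one_mul]
      _ = Rhᵀ * (Rh * Rh.adjugate) := by rw [Matrix.mul_assoc]
      _ = Rhᵀ := by rw [h1, Matrix.mul_one]
  have hmain : Rh.mulVec (∑ j, (s j / 2) •
        crossProduct (Rhᵀ.mulVec (υr j)) (Rᵀ.mulVec (υr j))) =
      ∑ j, (s j / 2) • crossProduct (υr j) ((Rh * Rᵀ).mulVec (υr j)) := by
    have hsum : ∀ (f : Fin nR → Fin 3 → ℝ),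
        Rh.mulVec (∑ j, f j) = ∑ j, Rh.mulVec (f j) := by
      intro f
      ext i
      simp [Matrix.mulVec, dotProduct, Finset.mul_sum, Finset.sum_apply]
      exact Finset.sum_comm
    rw [hsum]
    refine Finset.sum_congr rfl fun j _ => ?_
    rw [Matrix.mulVec_smul]
    congr 1
    have hw : Rᵀ.mulVec (υr j) = Rhᵀ.mulVec ((Rh * Rᵀ).mulVec (υr j)) := by
      rw [Matrix.mulVec_mulVec, ← Matrix.mul_assoc, hRh1, Matrix.one_mul]
    rw [hw, cross_mulVec, Matrix.adjugate_transpose, Matrix.transpose_transpose, hadj,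
      Matrix.mulVec_mulVec, hRh2, Matrix.one_mulVec]
  have hA : Rh * Rᵀ * ∑ j, s j • Matrix.vecMulVec (υr j) (υr j) =
      ∑ j, s j • Matrix.vecMulVec ((Rh * Rᵀ).mulVec (υr j)) (υr j) := by
    rw [Finset.mul_sum]
    refine Finset.sum_congr rfl fun j _ => ?_
    rw [mul_smul_comm, mul_vecMulVec]
  have h1 : Pa (Rh * Rᵀ * ∑ j, s j • Matrix.vecMulVec (υr j) (υr j)) =
      skew (Rh.mulVec (∑ j, (s j / 2) •
        crossProduct (Rhᵀ.mulVec (υr j)) (Rᵀ.mulVec (υr j)))) := by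
    rw [hmain, hA, skew_sum, Pa, Matrix.transpose_sum, ← Finset.sum_sub_distrib,
      Finset.smul_sum]
    refine Finset.sum_congr rfl fun j _ => ?_
    rw [skew_smul, skew_cross, Matrix.transpose_smul, vecMulVec_tr, ← smul_sub,
      smul_smul]
    congr 1
    ring
  exact ⟨h1, by rw [h1, vex_skew]⟩
end
end

section
/- Let T = [R P; 0 1] and T̂ = [R̂ P̂; 0 1] be in SE(3), let p ∈ ℝ³ with y = Rᵀ(p − P), set T̃ = T̂T⁻¹, and let b = (b₁, b₂) ∈ ℝ⁶. Then the 4-vector T̂ [b]∧ T̂⁻¹ · T̃ · (p,1) has last component 0 and its first three components equal −R̂[y]ₓ b₁ + R̂ b₂; moreover this 4-vector equals Qᵀ · Ad̄_{T̂} b where Q ∈ ℝ⁶ˣ⁴ is the block matrix [[R̂y+P̂]ₓ 0; I₃ 0] (with zero fourth column). -/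
open Matrix

noncomputable section

lemma skew_transpose (v : Fin 3 → ℝ) : (skew v)ᵀ = -skew v := by
  ext i j; fin_cases i <;> fin_cases j <;> simp [skew]

lemma skew_add (a b : Fin 3 → ℝ) : skew (a + b) = skew a + skew b := by
  ext i j; fin_cases i <;> fin_cases j <;> simp [skew] <;> ring

lemma skew_anti (a b : Fin 3 → ℝ) :
    (skew a).mulVec b = -((skew b).mulVec a) := by
  funext i; fin_cases i <;>
    simp [skew, mulVec, dotProduct, Fin.sum_univ_three] <;> ring

lemma so3_cross (M : Matrix (Fin 3) (Fin 3) ℝ) (hM : so3 M) (a b : Fin 3 → ℝ) :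
    (skew (M.mulVec a)).mulVec (M.mulVec b) = M.mulVec ((skew a).mulVec b) := by
  have key : Mᵀ.mulVec ((skew (M.mulVec a)).mulVec (M.mulVec b))
      = M.det • ((skew a).mulVec b) := by
    funext i; fin_cases i <;>
      simp [skew, mulVec, dotProduct, Matrix.det_fin_three, Fin.sum_univ_three,
        Matrix.transpose_apply] <;> ring
  calc (skew (M.mulVec a)).mulVec (M.mulVec b)
      = (M * Mᵀ).mulVec ((skew (M.mulVec a)).mulVec (M.mulVec b)) := by
        rw [hM.2.1, Matrix.one_mulVec]
    _ = M.mulVec (Mᵀ.mulVec ((skew (M.mulVec a)).mulVec (M.mulVec b))) := by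
        simp [Matrix.mul_assoc]
    _ = M.mulVec ((skew a).mulVec b) := by rw [key, hM.2.2, one_smul]

lemma homT_mul_homT (A B : Matrix (Fin 3) (Fin 3) ℝ) (u v : Fin 3 → ℝ) :
    homT A u * homT B v = homT (A * B) (A.mulVec v + u) := by
  simp only [homT, Matrix.fromBlocks_multiply, Matrix.mul_zero, Matrix.zero_mul,
    Matrix.mul_one, Matrix.one_mul, add_zero, zero_add, Matrix.zero_mul]
  congr 1

lemma homT_one : homT 1 0 = (1 : Matrix (Fin 3 ⊕ Fin 1) (Fin 3 ⊕ Fin 1) ℝ) := by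
  have : (Matrix.of fun i (_ : Fin 1) => (0 : Fin 3 → ℝ) i)
      = (0 : Matrix (Fin 3) (Fin 1) ℝ) := by ext i j; simp
  rw [homT, this, Matrix.fromBlocks_one]

lemma homT_right_inv (R : Matrix (Fin 3) (Fin 3) ℝ) (hR : so3 R) (P : Fin 3 → ℝ) :
    homT R P * homT Rᵀ (-(Rᵀ.mulVec P)) = 1 := by
  rw [homT_mul_homT, hR.2.1, Matrix.mulVec_neg, Matrix.mulVec_mulVec, hR.2.1,
    Matrix.one_mulVec, neg_add_cancel, homT_one]

lemma homT_left_inv (R : Matrix (Fin 3) (Fin 3) ℝ) (hR : so3 R) (P : Fin 3 → ℝ) :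
    homT Rᵀ (-(Rᵀ.mulVec P)) * homT R P = 1 := by
  rw [homT_mul_homT, hR.1, add_neg_cancel, homT_one]

lemma homT_inv (R : Matrix (Fin 3) (Fin 3) ℝ) (hR : so3 R) (P : Fin 3 → ℝ) :
    (homT R P)⁻¹ = homT Rᵀ (-(Rᵀ.mulVec P)) :=
  Matrix.inv_eq_right_inv (homT_right_inv R hR P)

lemma colVec_mulVec (c : Fin 3 → ℝ) (x : Fin 1 → ℝ) :
    (Matrix.of fun i (_ : Fin 1) => c i).mulVec x = x 0 • c := by
  ext i; simp [mulVec, dotProduct]; ring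

lemma homT_mulVec_hvec (A : Matrix (Fin 3) (Fin 3) ℝ) (c v : Fin 3 → ℝ) :
    (homT A c).mulVec (hvec v) = hvec (A.mulVec v + c) := by
  rw [homT, hvec, hvec, Matrix.fromBlocks_mulVec]
  simp [colVec_mulVec, Matrix.zero_mulVec, Matrix.one_mulVec,
    Sum.elim_comp_inl, Sum.elim_comp_inr]

lemma wedge_mulVec_hvec (b₁ b₂ v : Fin 3 → ℝ) :
    (wedge b₁ b₂).mulVec (hvec v) = Sum.elim ((skew b₁).mulVec v + b₂) 0 := by
  rw [wedge, hvec, Matrix.fromBlocks_mulVec]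
  simp [colVec_mulVec, Matrix.zero_mulVec, Sum.elim_comp_inl, Sum.elim_comp_inr]

lemma homT_mulVec_elim0 (A : Matrix (Fin 3) (Fin 3) ℝ) (c w : Fin 3 → ℝ) :
    (homT A c).mulVec (Sum.elim w 0) = Sum.elim (A.mulVec w) 0 := by
  rw [homT, Matrix.fromBlocks_mulVec]
  simp [colVec_mulVec, Matrix.zero_mulVec, Matrix.one_mulVec,
    Sum.elim_comp_inl, Sum.elim_comp_inr]

/-- with `T = [R P; 0 1]`, `T̂ = [R̂ P̂; 0 1]`, `y = Rᵀ(p − P)`,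
`T̃ = T̂T⁻¹` and `b = (b₁,b₂) ∈ ℝ⁶`, the 4-vector `T̂[b]∧T̂⁻¹·T̃·(p,1)` has last component
`0`, first three components `−R̂[y]ₓb₁ + R̂b₂`, and equals `Qᵀ·Ad̄_{T̂}b` where
`Q = [[R̂y+P̂]ₓ 0; I₃ 0] ∈ ℝ⁶ˣ⁴`. -/
theorem stmt17 (R Rh : Matrix (Fin 3) (Fin 3) ℝ) (hR : so3 R) (hRh : so3 Rh)
    (P Ph p : Fin 3 → ℝ) (b₁ b₂ : Fin 3 → ℝ) :
    ((homT Rh Ph * wedge b₁ b₂ * (homT Rh Ph)⁻¹ *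
        (homT Rh Ph * (homT R P)⁻¹)).mulVec (hvec p)) (Sum.inr 0) = 0 ∧
    (∀ i, ((homT Rh Ph * wedge b₁ b₂ * (homT Rh Ph)⁻¹ *
        (homT Rh Ph * (homT R P)⁻¹)).mulVec (hvec p)) (Sum.inl i) =
      ((-(Rh * skew (Rᵀ.mulVec (p - P)))).mulVec b₁ + Rh.mulVec b₂) i) ∧
    (homT Rh Ph * wedge b₁ b₂ * (homT Rh Ph)⁻¹ *
        (homT Rh Ph * (homT R P)⁻¹)).mulVec (hvec p) =
      (Matrix.fromBlocks (skew (Rh.mulVec (Rᵀ.mulVec (p - P)) + Ph))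
          (0 : Matrix (Fin 3) (Fin 1) ℝ) (1 : Matrix (Fin 3) (Fin 3) ℝ)
          (0 : Matrix (Fin 3) (Fin 1) ℝ))ᵀ.mulVec
        ((adBar Rh Ph).mulVec (Sum.elim b₁ b₂)) := by
  set y : Fin 3 → ℝ := Rᵀ.mulVec (p - P) with hy
  have hMeq : homT Rh Ph * wedge b₁ b₂ * (homT Rh Ph)⁻¹ * (homT Rh Ph * (homT R P)⁻¹)
      = homT Rh Ph * wedge b₁ b₂ * (homT R P)⁻¹ := by
    rw [mul_assoc (homT Rh Ph * wedge b₁ b₂), ← mul_assoc (homT Rh Ph)⁻¹,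
      homT_inv Rh hRh Ph, homT_left_inv Rh hRh Ph, one_mul]
  have hvecEq : (homT Rh Ph * wedge b₁ b₂ * (homT Rh Ph)⁻¹ *
      (homT Rh Ph * (homT R P)⁻¹)).mulVec (hvec p)
      = Sum.elim (Rh.mulVec ((skew b₁).mulVec y + b₂)) 0 := by
    rw [hMeq, homT_inv R hR P, ← Matrix.mulVec_mulVec, ← Matrix.mulVec_mulVec,
      homT_mulVec_hvec]
    have h1 : Rᵀ.mulVec p + -(Rᵀ.mulVec P) = y := by
      rw [hy, Matrix.mulVec_sub, sub_eq_add_neg]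
    rw [h1, wedge_mulVec_hvec, homT_mulVec_elim0]
  refine ⟨by rw [hvecEq]; rfl, ?_, ?_⟩
  · intro i
    rw [hvecEq]
    show Rh.mulVec ((skew b₁).mulVec y + b₂) i = _
    rw [Matrix.mulVec_add, skew_anti b₁ y, Matrix.mulVec_neg,
      Matrix.mulVec_mulVec, ← Matrix.neg_mulVec]
  · rw [hvecEq]
    have hside : (Matrix.fromBlocks (skew (Rh.mulVec y + Ph))
          (0 : Matrix (Fin 3) (Fin 1) ℝ) (1 : Matrix (Fin 3) (Fin 3) ℝ)
          (0 : Matrix (Fin 3) (Fin 1) ℝ))ᵀ.mulVec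
          ((adBar Rh Ph).mulVec (Sum.elim b₁ b₂))
        = Sum.elim ((skew (Rh.mulVec y + Ph))ᵀ.mulVec (Rh.mulVec b₁) +
            ((skew Ph * Rh).mulVec b₁ + Rh.mulVec b₂)) 0 := by
      rw [adBar, Matrix.fromBlocks_mulVec, Matrix.fromBlocks_transpose,
        Matrix.fromBlocks_mulVec]
      simp [Sum.elim_comp_inl, Sum.elim_comp_inr, Matrix.zero_mulVec,
        Matrix.one_mulVec, Matrix.transpose_zero, Matrix.transpose_one]
    rw [hside]
    rw [skew_transpose, skew_add, Matrix.neg_mulVec, Matrix.add_mulVec,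
      so3_cross Rh hRh y b₁, Matrix.mulVec_add, skew_anti b₁ y, Matrix.mulVec_neg,
      ← Matrix.mulVec_mulVec (M := skew Ph) (N := Rh)]
    abel
end
end

section
/- Let M ∈ ℝ³ˣ³ be a constant matrix, let β : [0,∞) → ℝ³ be continuous, and let R̃ : [0,∞) → SO(3) be a differentiable curve satisfying R̃' = [β]ₓ R̃. Then the function t ↦ ‖R̃(t)M‖_I = (1/4)Tr((I₃ − R̃(t))M) is differentiable with derivative (d/dt)‖R̃M‖_I = (1/2) · vex(P_a(R̃M))ᵀ β. -/
open Matrix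

noncomputable section

theorem hasDerivAt_trace_mul_const {𝕜 m n : Type*} [NontriviallyNormedField 𝕜] [Fintype m]
    [Fintype n] {A : 𝕜 → Matrix m n 𝕜} {A' : Matrix m n 𝕜} {t : 𝕜} (M : Matrix n m 𝕜)
    (hA : ∀ i j, HasDerivAt (fun s => A s i j) (A' i j) t) :
    HasDerivAt (fun s => trace (A s * M)) (trace (A' * M)) t := by
  simp only [trace, diag, mul_apply]
  exact HasDerivAt.fun_sum fun i _ => HasDerivAt.fun_sum fun j _ => (hA i j).mul_const _

/-- The trace pairing with the skew matrix `[b]ₓ` only sees the antisymmetric part of `A`. -/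
theorem trace_skew_mul (b : Fin 3 → ℝ) (A : Matrix (Fin 3) (Fin 3) ℝ) :
    trace (skew b * A) = -2 * (vex (Pa A) ⬝ᵥ b) := by
  simp only [trace, skew, Fin.isValue, cons_mul, Nat.succ_eq_add_one, Nat.reduceAdd, empty_mul,
    Equiv.symm_apply_apply, diag_apply, of_apply, cons_val', vecMul, dotProduct, Fin.sum_univ_three,
    cons_val_zero, zero_mul, cons_val_one, neg_mul, zero_add, cons_val, add_zero, cons_val_fin_one,
    vex, Pa, one_div, Matrix.smul_apply, Matrix.sub_apply, transpose_apply, smul_eq_mul]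
  ring

theorem stmt19_general (M : Matrix (Fin 3) (Fin 3) ℝ) (β : ℝ → Fin 3 → ℝ)
    (Rt : ℝ → Matrix (Fin 3) (Fin 3) ℝ)
    (hRt' : ∀ t ≥ (0 : ℝ), ∀ i j,
      HasDerivAt (fun s => Rt s i j) ((skew (β t) * Rt t) i j) t) :
    ∀ t ≥ (0 : ℝ),
      HasDerivAt (fun s => (1 / 4 : ℝ) * Matrix.trace ((1 - Rt s) * M))
        ((1 / 2 : ℝ) * (vex (Pa (Rt t * M)) ⬝ᵥ β t)) t := by
  intro t ht
  have hOneSub : ∀ i j,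
      HasDerivAt (fun s => (1 - Rt s) i j) ((-(skew (β t) * Rt t) : Matrix _ _ ℝ) i j) t :=
    fun i j => by
      simpa only [Matrix.sub_apply, Matrix.neg_apply] using (hRt' t ht i j).const_sub _
  refine ((hasDerivAt_trace_mul_const M hOneSub).const_mul (1 / 4 : ℝ)).congr_deriv ?_
  rw [Matrix.neg_mul, trace_neg, Matrix.mul_assoc, trace_skew_mul]
  ring

/-- if `M` is constant, `β` continuous on `[0,∞)` and `R̃' = [β]ₓ R̃` with
`R̃ ∈ SO(3)` on `[0,∞)`, then `t ↦ ‖R̃(t)M‖_I = (1/4)Tr((I − R̃(t))M)` is differentiable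
with derivative `(1/2)·vex(P_a(R̃M))ᵀβ`. -/
theorem stmt19 (M : Matrix (Fin 3) (Fin 3) ℝ) (β : ℝ → Fin 3 → ℝ)
    (hβ : ContinuousOn β (Set.Ici 0))
    (Rt : ℝ → Matrix (Fin 3) (Fin 3) ℝ) (hRt : ∀ t ≥ (0 : ℝ), so3 (Rt t))
    (hRt' : ∀ t ≥ (0 : ℝ), ∀ i j,
      HasDerivAt (fun s => Rt s i j) ((skew (β t) * Rt t) i j) t) :
    ∀ t ≥ (0 : ℝ),
      HasDerivAt (fun s => (1 / 4 : ℝ) * Matrix.trace ((1 - Rt s) * M))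
        ((1 / 2 : ℝ) * (vex (Pa (Rt t * M)) ⬝ᵥ β t)) t :=
  stmt19_general M β Rt hRt'
end
end
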